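/- arXiv:1908.11009 — 3 statements merged into one kernel-verified Lean document; each statement's English description precedes it below -/
import Mathlib

section
/- For every nonnegative integer n, $B_{n,\lambda}^{(c)}(x,y) = \sum_{k=0}^{n} \sum_{m=0}^{\lfloor k/2\rfloor} \binom{n}{k} B_{n-k,\lambda}(x)\,(-1)^m y^{2m} \lambda^{k-2m} S_1(k,2m)$, where $S_1(k,j)$ denote the (signed) Stirling numbers of the first kind defined by $(\log(1+t))^j/j! = \sum_{k\ge j} S_1(k,j) t^k/k!$. -/
open PowerSeries Finset Complex

/-- The degenerate falling factorial `(x)_{n,λ} = x(x-λ)⋯(x-(n-1)λ)`. -/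
noncomputable def dff (l x : ℂ) (n : ℕ) : ℂ := ∏ j ∈ Finset.range n, (x - j * l)

/-- Exponential generating function of a sequence: `Σ f n * t^n / n!`. -/
noncomputable def egf (f : ℕ → ℂ) : PowerSeries ℂ := PowerSeries.mk fun n => f n / n.factorial

/-- The degenerate exponential `e_λ^x(t) = (1+λt)^{x/λ} = Σ (x)_{n,λ} t^n/n!` as a power series. -/
noncomputable def degExp (l x : ℂ) : PowerSeries ℂ := egf (dff l x)

/-- The degenerate cosine `cos_λ^{(y)}(t) = cos((y/λ) log(1+λt)) = (e_λ^{iy}(t)+e_λ^{-iy}(t))/2`. -/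
noncomputable def degCos (l y : ℂ) : PowerSeries ℂ :=
  PowerSeries.C (R := ℂ) (1/2) * (degExp l (Complex.I * y) + degExp l (-(Complex.I * y)))

/-- The degenerate sine `sin_λ^{(y)}(t) = sin((y/λ) log(1+λt)) = (e_λ^{iy}(t)-e_λ^{-iy}(t))/(2i)`. -/
noncomputable def degSin (l y : ℂ) : PowerSeries ℂ :=
  PowerSeries.C (R := ℂ) (1/(2*Complex.I)) * (degExp l (Complex.I * y) - degExp l (-(Complex.I * y)))

/-- The exponential series `e^{at} = Σ a^n t^n/n!`. -/
noncomputable def expS (a : ℂ) : PowerSeries ℂ := egf (fun n => a ^ n)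

/-- The series of `log(1+t)`. -/
noncomputable def logS : PowerSeries ℂ := PowerSeries.mk fun n => if n = 0 then 0 else (-1)^(n+1) / n

/-!
Dividing `hBc` by `hB` gives `egf Bc = degCos λ y * egf B`, so `Bc` is the binomial convolution
of `B` with the coefficients of `degCos λ y = (e_λ^{iy} + e_λ^{-iy}) / 2`, namely
`((iy)_{k,λ} + (-iy)_{k,λ}) / 2`. Expanding `(z)_{k,λ} = ∑ⱼ S₁(k,j) zʲ λ^{k-j}`, the odd powers
of `iy` cancel and the even ones give `(-1)ᵐ y^{2m}`. The expansion follows by induction on `k`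
from `S₁(k+1,j+1) = S₁(k,j) - k S₁(k,j+1)`, which is read off from
`(1 + t) d/dt (log(1+t))^{j+1} = (j+1) (log(1+t))^j` since `d/dt log(1+t) = 1/(1+t)`.
-/

@[simp] lemma coeff_egf (f : ℕ → ℂ) (n : ℕ) : coeff n (egf f) = f n / n.factorial :=
  coeff_mk _ _

lemma egf_injective : Function.Injective egf := by
  intro f g h
  funext n
  have hn := congrArg (coeff n) h
  simp only [coeff_egf] at hn
  exact (div_left_inj' (Nat.cast_ne_zero.2 n.factorial_ne_zero)).1 hn

lemma egf_add (f g : ℕ → ℂ) : egf f + egf g = egf (f + g) := by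
  ext n; simp [add_div]

lemma C_mul_egf (a : ℂ) (f : ℕ → ℂ) : C a * egf f = egf (fun n => a * f n) := by
  ext n; simp [mul_div_assoc]

lemma derivative_egf (f : ℕ → ℂ) : d⁄dX ℂ (egf f) = egf (fun n => f (n + 1)) := by
  ext n
  simp only [coeff_derivative, coeff_egf, Nat.factorial_succ]
  push_cast
  field_simp

lemma X_mul_derivative_egf (f : ℕ → ℂ) : X * d⁄dX ℂ (egf f) = egf (fun n => n * f n) := by
  ext (_ | n)
  · simp
  · simp only [coeff_succ_X_mul, derivative_egf, coeff_egf, Nat.factorial_succ]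
    push_cast
    field_simp

lemma egf_mul (f g : ℕ → ℂ) :
    egf f * egf g = egf (fun n => ∑ k ∈ range (n + 1), n.choose k * f k * g (n - k)) := by
  ext n
  simp only [coeff_mul, coeff_egf, Nat.sum_antidiagonal_eq_sum_range_succ_mk, sum_div]
  refine sum_congr rfl fun k hk => ?_
  rw [Nat.cast_choose ℂ (Nat.lt_succ_iff.1 (mem_range.1 hk))]
  field_simp
  rw [mul_div_mul_right _ _ (Nat.cast_ne_zero.2 n.factorial_ne_zero)]

lemma one_add_X_mul_derivative_logS : (1 + X) * d⁄dX ℂ logS = 1 := by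
  have hlog : logS = log ℂ := by ext n; simp [logS]
  have hgeom : d⁄dX ℂ logS = rescale (-1) (mk 1) := by
    rw [hlog, PowerSeries.deriv_log, rescale_mk]; simp
  have hden : (1 + X : ℂ⟦X⟧) = rescale (-1) (1 - X) := by
    simp [sub_eq_add_neg]
  rw [hgeom, hden, ← map_mul, mul_comm, mk_one_mul_one_sub_eq_one, map_one]

lemma sum_range_succ_eq_sum_two_mul {M : Type*} [AddCommMonoid M] (f : ℕ → M) (k : ℕ)
    (hodd : ∀ j, Odd j → f j = 0) :
    ∑ j ∈ range (k + 1), f j = ∑ m ∈ range (k / 2 + 1), f (2 * m) := by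
  refine Eq.trans ?_ (sum_image (g := fun m => 2 * m) fun a _ b _ hab => by simpa using hab)
  refine (sum_subset (fun j => by simp; omega) fun j hj hnot => hodd j ?_).symm
  simp only [mem_range, mem_image, not_exists, not_and] at hj hnot
  exact Nat.odd_iff.2 (by by_contra; exact hnot (j / 2) (by omega) (by omega))

lemma coeff_one_degExp (l z : ℂ) : coeff 1 (degExp l z) = z := by
  simp [degExp, dff]

def IsStirlingFirst (S1 : ℕ → ℕ → ℂ) : Prop :=
  ∀ j, logS ^ j = PowerSeries.C (R := ℂ) (Nat.factorial j) * egf (fun k => S1 k j)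

namespace IsStirlingFirst

variable {S1 : ℕ → ℕ → ℂ}

lemma logS_pow (h : IsStirlingFirst S1) (j : ℕ) :
    logS ^ j = egf (fun k => j.factorial * S1 k j) := by
  rw [h j, C_mul_egf]

lemma zero_right (h : IsStirlingFirst S1) (k : ℕ) : S1 k 0 = if k = 0 then 1 else 0 := by
  have hk := congrArg (coeff k) (h.logS_pow 0)
  rw [pow_zero, coeff_one, coeff_egf] at hk
  split_ifs at hk ⊢ with hk0
  · subst hk0; simpa using hk.symm
  · simpa [Nat.factorial_ne_zero] using hk.symm

lemma eq_zero_of_lt (h : IsStirlingFirst S1) {k j : ℕ} (hkj : k < j) : S1 k j = 0 := by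
  obtain ⟨g, hg⟩ : X ∣ logS := by
    rw [X_dvd_iff]; simp [logS]
  have hk := congrArg (coeff k) (h.logS_pow j)
  rw [hg, mul_pow, coeff_X_pow_mul', if_neg (not_le.2 hkj), coeff_egf] at hk
  simpa [Nat.factorial_ne_zero] using hk.symm

lemma succ_succ (h : IsStirlingFirst S1) (k j : ℕ) :
    S1 (k + 1) (j + 1) = S1 k j - k * S1 k (j + 1) := by
  have hderiv : (1 + X) * d⁄dX ℂ (logS ^ (j + 1)) = C ((j + 1 : ℕ) : ℂ) * logS ^ j := by
    rw [Derivation.leibniz_pow, Nat.add_sub_cancel, smul_eq_mul, mul_smul_comm,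
      mul_left_comm, one_add_X_mul_derivative_logS, mul_one, nsmul_eq_mul, map_natCast]
  rw [h.logS_pow, h.logS_pow, add_mul, one_mul, X_mul_derivative_egf, derivative_egf, egf_add,
    C_mul_egf] at hderiv
  have hk := congrFun (egf_injective hderiv) k
  simp only [Pi.add_apply, Nat.factorial_succ] at hk
  apply mul_left_cancel₀ (Nat.cast_ne_zero.2 (j + 1).factorial_ne_zero)
  rw [Nat.factorial_succ]
  push_cast at hk ⊢
  linear_combination hk

lemma dff_eq_sum (h : IsStirlingFirst S1) (l z : ℂ) (k : ℕ) :
    dff l z k = ∑ j ∈ range (k + 1), S1 k j * z ^ j * l ^ (k - j) := by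
  induction k with
  | zero => simp [dff, h.zero_right]
  | succ k ih =>
    have hshift : ∑ j ∈ range (k + 1), S1 k (j + 1) * z ^ (j + 1) * l ^ (k - j) =
        l * ∑ j ∈ range (k + 1), S1 k j * z ^ j * l ^ (k - j) - S1 k 0 * l ^ (k + 1) := by
      have hext := sum_range_succ' (fun j => S1 k j * z ^ j * l ^ (k + 1 - j)) (k + 1)
      rw [sum_range_succ, h.eq_zero_of_lt (lt_add_one k)] at hext
      simp only [Nat.add_sub_add_right, pow_zero, mul_one, Nat.sub_zero, zero_mul,
        add_zero] at hext
      rw [eq_sub_iff_add_eq, mul_sum, ← hext]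
      refine sum_congr rfl fun j hj => ?_
      rw [Nat.sub_add_comm (Nat.lt_succ_iff.1 (mem_range.1 hj)), pow_succ]
      ring
    have hrec : ∑ j ∈ range (k + 2), S1 (k + 1) j * z ^ j * l ^ (k + 1 - j) =
        z * ∑ j ∈ range (k + 1), S1 k j * z ^ j * l ^ (k - j) -
          k * ∑ j ∈ range (k + 1), S1 k (j + 1) * z ^ (j + 1) * l ^ (k - j) := by
      rw [sum_range_succ', h.zero_right, if_neg k.succ_ne_zero, mul_sum, mul_sum,
        ← sum_sub_distrib]
      simp only [h.succ_succ, Nat.add_sub_add_right, zero_mul, add_zero]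
      refine sum_congr rfl fun j _ => ?_
      ring
    have hk : (k : ℂ) * S1 k 0 = 0 := by
      rw [h.zero_right]; split_ifs with hk0 <;> simp [hk0]
    rw [dff, prod_range_succ, ← dff, ih, hrec, hshift]
    linear_combination -l ^ (k + 1) * hk

lemma degCos_eq_egf (h : IsStirlingFirst S1) (l y : ℂ) :
    degCos l y = egf fun k => ∑ m ∈ range (k / 2 + 1),
      (-1) ^ m * y ^ (2 * m) * l ^ (k - 2 * m) * S1 k (2 * m) := by
  rw [degCos, degExp, degExp, egf_add, C_mul_egf]
  congr 1
  funext k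
  rw [Pi.add_apply, h.dff_eq_sum, h.dff_eq_sum, ← sum_add_distrib, mul_sum,
    sum_range_succ_eq_sum_two_mul]
  · refine sum_congr rfl fun m _ => ?_
    rw [pow_mul, pow_mul, neg_sq, mul_pow, I_sq]
    ring
  · intro j hj
    rw [hj.neg_pow]
    ring

end IsStirlingFirst

theorem stmt3 (lam x y : ℝ) (B Bc : ℕ → ℂ) (S1 : ℕ → ℕ → ℂ)
    (hB : egf B * (degExp lam (1/2) - degExp lam (-(1/2))) = PowerSeries.X * degExp lam x)
    (hBc : egf Bc * (degExp lam (1/2) - degExp lam (-(1/2))) =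
      PowerSeries.X * degExp lam x * degCos lam y)
    (hS1 : ∀ j, logS ^ j = PowerSeries.C (R := ℂ) (Nat.factorial j) * egf (fun k => S1 k j))
    (n : ℕ) :
    Bc n = ∑ k ∈ Finset.range (n+1), ∑ m ∈ Finset.range (k/2+1),
      (n.choose k : ℂ) * B (n-k) * (-1)^m * (y:ℂ)^(2*m) * (lam:ℂ)^(k-2*m) * S1 k (2*m) := by
  have hD : degExp (lam : ℂ) (1/2) - degExp (lam : ℂ) (-(1/2)) ≠ 0 := fun h0 => by
    simpa [coeff_one_degExp] using congrArg (coeff 1) h0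
  have hBc_eq : egf Bc = degCos lam y * egf B :=
    mul_right_cancel₀ hD (by rw [hBc, mul_assoc (degCos _ _), hB]; ring)
  rw [IsStirlingFirst.degCos_eq_egf hS1, egf_mul] at hBc_eq
  rw [congrFun (egf_injective hBc_eq) n]
  refine sum_congr rfl fun k _ => ?_
  rw [mul_sum, sum_mul]
  refine sum_congr rfl fun m _ => ?_
  ring
end

section
/- For all nonnegative integers n and positive integers k, the type 2 degenerate Bernoulli numbers of negative order satisfy $\binom{n+k}{k} B_{n,\lambda}^{(-k)} = T_\lambda(n+k,k)$, where $T_\lambda(n,k)$ are the degenerate central factorial numbers of the second kind. -/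
open PowerSeries Finset Complex

theorem coeff_add_X_pow_mul_egf (f : ℕ → ℂ) (n k : ℕ) :
    coeff (n + k) (X ^ k * egf f) = f n / n.factorial := by
  rw [coeff_X_pow_mul, egf, coeff_mk]

theorem choose_mul_eq_of_X_pow_mul_egf_eq {f g : ℕ → ℂ} {k : ℕ}
    (h : X ^ k * egf f = C (k.factorial : ℂ) * egf g) (n : ℕ) :
    ((n + k).choose k : ℂ) * f n = g (n + k) := by
  have hn : (n.factorial : ℂ) ≠ 0 := mod_cast n.factorial_ne_zero
  have hk : (k.factorial : ℂ) ≠ 0 := mod_cast k.factorial_ne_zero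
  have hcoeff := congrArg (coeff (n + k)) h
  rw [coeff_add_X_pow_mul_egf, coeff_C_mul, egf, coeff_mk, mul_div_assoc', div_eq_div_iff hn
    (mod_cast (n + k).factorial_ne_zero), ← Nat.add_choose_mul_factorial_mul_factorial n k] at hcoeff
  push_cast at hcoeff
  apply mul_right_cancel₀ (mul_ne_zero hk hn)
  linear_combination hcoeff

theorem stmt10_general (lam : ℝ) (k : ℕ) (Bneg T : ℕ → ℂ)
    (hB : (degExp lam (1/2) - degExp lam (-(1/2))) ^ k = PowerSeries.X ^ k * egf Bneg)
    (hT : (degExp lam (1/2) - degExp lam (-(1/2))) ^ k =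
      PowerSeries.C (R := ℂ) (Nat.factorial k) * egf T)
    (n : ℕ) :
    ((n+k).choose k : ℂ) * Bneg n = T (n+k) :=
  choose_mul_eq_of_X_pow_mul_egf_eq (hB.symm.trans hT) n

theorem stmt10 (lam : ℝ) (k : ℕ) (hk : 0 < k) (Bneg T : ℕ → ℂ)
    (hB : (degExp lam (1/2) - degExp lam (-(1/2))) ^ k = PowerSeries.X ^ k * egf Bneg)
    (hT : (degExp lam (1/2) - degExp lam (-(1/2))) ^ k =
      PowerSeries.C (R := ℂ) (Nat.factorial k) * egf T)
    (n : ℕ) :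
    ((n+k).choose k : ℂ) * Bneg n = T (n+k) :=
  stmt10_general lam k Bneg T hB hT n
end

section
/- For every nonnegative integer n and real $\alpha$, the type 2 degenerate cosine-Bernoulli polynomials of order $\alpha$ satisfy $B_{n,\lambda}^{(c,\alpha)}(x,y)=\sum_{k=0}^{n}\sum_{m=0}^{\lfloor k/2\rfloor}\binom{n}{k}B_{n-k,\lambda}^{(\alpha)}(x)(-1)^m\lambda^{k-2m}y^{2m}S_1(k,2m)$. -/
open PowerSeries Finset Complex

lemma egf_mul_egf (f g : ℕ → ℂ) :
    egf f * egf g = egf fun n => ∑ k ∈ range (n + 1), (n.choose k : ℂ) * f k * g (n - k) := by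
  ext n
  rw [coeff_mul, Nat.sum_antidiagonal_eq_sum_range_succ_mk, coeff_egf, sum_div]
  refine sum_congr rfl fun k hk => ?_
  have hkn : k ≤ n := Nat.lt_succ_iff.1 (mem_range.1 hk)
  have hn : (n.factorial : ℂ) ≠ 0 := Nat.cast_ne_zero.2 n.factorial_ne_zero
  simp only [coeff_egf, Nat.cast_choose ℂ hkn]
  field_simp

lemma degCos_eq_egf (l y : ℂ) :
    degCos l y = egf fun k => (dff l (I * y) k + dff l (-(I * y)) k) / 2 := by
  ext k
  simp only [degCos, degExp, coeff_C_mul, map_add, coeff_egf]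
  ring

lemma sum_range_mul_add_neg_pow_div_two {K : Type*} [Field K] [CharZero K]
    (f : ℕ → K) (z : K) (k : ℕ) :
    ∑ j ∈ range (k + 1), f j * (z ^ j + (-z) ^ j) / 2
      = ∑ m ∈ range (k / 2 + 1), f (2 * m) * z ^ (2 * m) := by
  have hterm : ∀ j, f j * (z ^ j + (-z) ^ j) / 2 = if Even j then f j * z ^ j else 0 := by
    intro j
    split_ifs with hj
    · rw [hj.neg_pow]; ring
    · rw [(Nat.not_even_iff_odd.1 hj).neg_pow]; ring
  have hevens : (range (k + 1)).filter Even = (range (k / 2 + 1)).image (2 * ·) := by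
    ext j
    simp only [mem_filter, mem_range, mem_image, Nat.even_iff]
    constructor
    · rintro ⟨hj, hj2⟩
      exact ⟨j / 2, by omega, by omega⟩
    · rintro ⟨m, hm, rfl⟩
      omega
  simp_rw [hterm]
  rw [← sum_filter, hevens, sum_image fun a _ b _ h => by simpa using h]

lemma constantCoeff_logS : constantCoeff logS = 0 := by
  simp [logS]

lemma derivative_logS : d⁄dX ℂ logS = mk fun n => (-1) ^ n := by
  ext n
  have hn : (n : ℂ) + 1 ≠ 0 := Nat.cast_add_one_ne_zero n
  simp only [coeff_derivative, logS, coeff_mk, Nat.succ_ne_zero, if_false]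
  push_cast
  field_simp
  ring

lemma one_add_X_mul_derivative_logS_pow (j : ℕ) :
    (1 + X) * d⁄dX ℂ (logS ^ (j + 1)) = C ((j : ℂ) + 1) * logS ^ j := by
  rw [Derivation.leibniz_pow, Nat.add_sub_cancel, smul_eq_mul, nsmul_eq_mul, mul_left_comm,
    mul_left_comm (1 + X), one_add_X_mul_derivative_logS, mul_one, ← map_natCast C]
  push_cast
  rfl

lemma coeff_one_add_X_mul_derivative {R : Type*} [CommSemiring R] (f : R⟦X⟧) (k : ℕ) :
    coeff k ((1 + X) * d⁄dX R f) = (k + 1) * coeff (k + 1) f + k * coeff k f := by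
  rw [add_mul, one_mul, map_add, coeff_derivative]
  cases k with
  | zero => simp [coeff_zero_eq_constantCoeff]
  | succ k =>
    rw [coeff_succ_X_mul, coeff_derivative]
    push_cast
    ring

section Stirling

variable {S1 : ℕ → ℕ → ℂ}
  (hS1 : ∀ j, logS ^ j = PowerSeries.C (R := ℂ) (Nat.factorial j) * egf (fun k => S1 k j))
include hS1

lemma S1_eq_coeff_logS_pow (k j : ℕ) :
    S1 k j = k.factorial * coeff k (logS ^ j) / j.factorial := by
  have hk : (k.factorial : ℂ) ≠ 0 := Nat.cast_ne_zero.2 k.factorial_ne_zero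
  have hj : (j.factorial : ℂ) ≠ 0 := Nat.cast_ne_zero.2 j.factorial_ne_zero
  rw [hS1, coeff_C_mul, coeff_egf]
  field_simp

lemma S1_zero_zero : S1 0 0 = 1 := by
  simp [S1_eq_coeff_logS_pow hS1]

lemma S1_succ_zero (k : ℕ) : S1 (k + 1) 0 = 0 := by
  simp [S1_eq_coeff_logS_pow hS1, coeff_one]

lemma S1_eq_zero_of_lt {k j : ℕ} (hkj : k < j) : S1 k j = 0 := by
  have hdvd : X ^ j ∣ logS ^ j := pow_dvd_pow_of_dvd (X_dvd_iff.2 constantCoeff_logS) j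
  rw [S1_eq_coeff_logS_pow hS1, X_pow_dvd_iff.1 hdvd k hkj, mul_zero, zero_div]

lemma S1_succ_succ (k j : ℕ) : S1 (k + 1) (j + 1) = S1 k j - k * S1 k (j + 1) := by
  have hrec := congrArg (coeff k) (one_add_X_mul_derivative_logS_pow j)
  rw [coeff_one_add_X_mul_derivative, coeff_C_mul] at hrec
  have hj : (j.factorial : ℂ) ≠ 0 := Nat.cast_ne_zero.2 j.factorial_ne_zero
  simp only [S1_eq_coeff_logS_pow hS1, Nat.factorial_succ]
  push_cast
  field_simp
  linear_combination (k.factorial : ℂ) * hrec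

lemma dff_eq_sum_S1 (l a : ℂ) (k : ℕ) :
    dff l a k = ∑ j ∈ range (k + 1), S1 k j * l ^ (k - j) * a ^ j := by
  induction k with
  | zero => simp [dff, S1_zero_zero hS1]
  | succ k ih =>
    set T := ∑ j ∈ range (k + 1), S1 k j * l ^ (k - j) * a ^ j
    have hshift : ∑ j ∈ range (k + 1), S1 k (j + 1) * l ^ (k - j) * a ^ (j + 1)
        + S1 k 0 * l ^ (k + 1) = l * T := by
      have h := sum_range_succ' (fun j => S1 k j * l ^ (k + 1 - j) * a ^ j) (k + 1)
      rw [sum_range_succ, S1_eq_zero_of_lt hS1 k.lt_succ_self] at h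
      simp only [Nat.add_sub_add_right, zero_mul, add_zero, Nat.sub_zero, pow_zero, mul_one] at h
      rw [← h, mul_sum]
      refine sum_congr rfl fun j hj => ?_
      rw [Nat.sub_add_comm (Nat.lt_succ_iff.1 (mem_range.1 hj)), pow_succ]
      ring
    have hk0 : (k : ℂ) * S1 k 0 = 0 := by
      cases k <;> simp [S1_succ_zero hS1]
    have hA : ∑ j ∈ range (k + 1), S1 k j * l ^ (k - j) * a ^ (j + 1) = T * a := by
      rw [sum_mul]
      exact sum_congr rfl fun _ _ => by ring
    have hB : ∑ j ∈ range (k + 1), k * S1 k (j + 1) * l ^ (k - j) * a ^ (j + 1)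
        = k * ∑ j ∈ range (k + 1), S1 k (j + 1) * l ^ (k - j) * a ^ (j + 1) := by
      rw [mul_sum]
      exact sum_congr rfl fun _ _ => by ring
    rw [dff, prod_range_succ, ← dff, ih, sum_range_succ', S1_succ_zero hS1]
    simp only [S1_succ_succ hS1, Nat.add_sub_add_right, zero_mul, add_zero, sub_mul,
      sum_sub_distrib, hA, hB]
    linear_combination (k : ℂ) * hshift - l ^ (k + 1) * hk0

lemma dff_add_dff_neg_div_two (l y : ℂ) (k : ℕ) :
    (dff l (I * y) k + dff l (-(I * y)) k) / 2
      = ∑ m ∈ range (k / 2 + 1), (-1) ^ m * l ^ (k - 2 * m) * y ^ (2 * m) * S1 k (2 * m) := by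
  simp_rw [dff_eq_sum_S1 hS1, ← sum_add_distrib, sum_div, ← mul_add]
  rw [sum_range_mul_add_neg_pow_div_two (fun j => S1 k j * l ^ (k - j))]
  refine sum_congr rfl fun m _ => ?_
  rw [pow_mul, mul_pow, I_sq, pow_mul]
  ring

end Stirling

theorem stmt11 (lam x y : ℝ) (F : PowerSeries ℂ) (Ba Bca : ℕ → ℂ) (S1 : ℕ → ℕ → ℂ)
    (hBa : egf Ba = F * degExp lam x)
    (hBca : egf Bca = F * degExp lam x * degCos lam y)
    (hS1 : ∀ j, logS ^ j = PowerSeries.C (R := ℂ) (Nat.factorial j) * egf (fun k => S1 k j))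
    (n : ℕ) :
    Bca n = ∑ k ∈ Finset.range (n+1), ∑ m ∈ Finset.range (k/2+1),
      (n.choose k : ℂ) * Ba (n-k) * (-1)^m * (lam:ℂ)^(k-2*m) * (y:ℂ)^(2*m) * S1 k (2*m) := by
  have hcos : degCos lam y = egf fun k => ∑ m ∈ range (k / 2 + 1),
      (-1) ^ m * (lam : ℂ) ^ (k - 2 * m) * (y : ℂ) ^ (2 * m) * S1 k (2 * m) := by
    simp_rw [degCos_eq_egf, dff_add_dff_neg_div_two hS1]
  have hprod : egf Bca = degCos lam y * egf Ba := by
    rw [hBca, hBa, mul_comm]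
  rw [hcos, egf_mul_egf] at hprod
  rw [congrFun (egf_injective hprod) n]
  refine sum_congr rfl fun k _ => ?_
  rw [mul_sum, sum_mul]
  exact sum_congr rfl fun m _ => by ring
end
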